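/- arXiv:2106.13735 — 5 statements merged into one kernel-verified Lean document; each statement's English description precedes it below -/
import Mathlib

section
/- Let p be a prime number and let A be an 𝔽_p-brace of cardinality p^4 (so that A^5 = 0). Then for all a, b, c ∈ A one has (a^{-1}∘b^{-1}∘a∘b)*c = a*(b*c) − b*(a*c) + a*(b*(a*c)) + b*(b*(a*c)) − b*(a*(b*c)) − a*(a*(b*c)), where a^{-1} denotes the inverse of a in the group (A,∘). -/
/-- A left brace: `(A, +)` an abelian group, `(A, *)` a group (we write the brace
multiplication `∘` as `*`), with `a * (b + c) + a = a * b + a * c`. -/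
class LeftBrace (A : Type*) extends Group A, AddCommGroup A where
  mul_add_eq : ∀ a b c : A, a * (b + c) + a = a * b + a * c

namespace LeftBrace

/-- The star operation `a * b = a∘b - a - b` of a left brace. -/
def star {A : Type*} [LeftBrace A] (a b : A) : A := a * b - a - b

end LeftBrace

/-- An `𝔽ₚ`-brace: a left brace whose additive group is a `ZMod p`-vector space
with `a * (α • b) = α • (a * b)`. -/
class FpBrace (p : ℕ) (A : Type*) extends LeftBrace A, Module (ZMod p) A where
  star_smul' : ∀ (α : ZMod p) (a b : A),
    LeftBrace.star a (α • b) = α • LeftBrace.star a b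

/-- The left chain `A^1 = A`, `A^{i+1} = A * A^i` (additive subgroup generated by
`a * b`, `a ∈ A`, `b ∈ A^i`). -/
def lpow (A : Type*) [LeftBrace A] : ℕ → AddSubgroup A
  | 0 => ⊤
  | 1 => ⊤
  | (n+2) => AddSubgroup.closure
      {x : A | ∃ a : A, ∃ b ∈ lpow A (n+1), x = LeftBrace.star a b}

/-- The right chain `A^{(1)} = A`, `A^{(i+1)} = A^{(i)} * A`. -/
def rpow (A : Type*) [LeftBrace A] : ℕ → AddSubgroup A
  | 0 => ⊤
  | 1 => ⊤
  | (n+2) => AddSubgroup.closure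
      {x : A | ∃ a ∈ rpow A (n+1), ∃ b : A, x = LeftBrace.star a b}

/-- A left brace is right nilpotent if `A^{(n)} = 0` for some `n`. -/
def IsRightNilpotent (A : Type*) [LeftBrace A] : Prop := ∃ n, rpow A n = ⊥

/-- The defining relations of the group XV on generators `P, Q, R, S`. -/
def XVRelations {A : Type*} [LeftBrace A] (p : ℕ) (P Q R S : A) : Prop :=
  Q * S = S * Q * P ∧ Q * R = R * Q ∧ P * S = S * P ∧ P * Q = Q * P ∧
  P * R = R * P ∧ R * S = S * R * Q ∧
  P ^ p = 1 ∧ Q ^ p = 1 ∧ R ^ p = 1 ∧ S ^ p = 1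

/-- The multiplicative group of the brace `A` is the group XV, with generators
`P, Q, R, S` satisfying the XV relations. -/
def IsXVBrace (p : ℕ) (A : Type*) [LeftBrace A] (P Q R S : A) : Prop :=
  Nat.card A = p ^ 4 ∧ Subgroup.closure {P, Q, R, S} = ⊤ ∧ XVRelations p P Q R S


/-- The Multiplicative Table with parameters `y, i, k`. -/
def MultTable {p : ℕ} {A : Type*} [LeftBrace A] [Module (ZMod p) A]
    (P Q R S : A) (y i k : ZMod p) : Prop :=
  LeftBrace.star P P = 0 ∧ LeftBrace.star P Q = 0 ∧
  LeftBrace.star P R = y • S ∧ LeftBrace.star P S = 0 ∧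
  LeftBrace.star Q P = 0 ∧ LeftBrace.star Q Q = -(y • S) ∧
  LeftBrace.star Q R = ((2 : ZMod p)⁻¹ * y) • S ∧ LeftBrace.star Q S = 0 ∧
  LeftBrace.star R P = y • S ∧ LeftBrace.star R Q = ((2 : ZMod p)⁻¹ * y) • S ∧
  LeftBrace.star R R = i • P + k • S ∧ LeftBrace.star R S = 0 ∧
  LeftBrace.star S P = 0 ∧ LeftBrace.star S Q = -P ∧
  LeftBrace.star S R = -Q + P - ((2 : ZMod p)⁻¹ * y) • S ∧ LeftBrace.star S S = 0

/-- Additive subgroup generated by all `x * y`, `x ∈ X`, `y ∈ Y`. -/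
def starSpan {A : Type*} [LeftBrace A] (X Y : AddSubgroup A) : AddSubgroup A :=
  AddSubgroup.closure {z : A | ∃ x ∈ X, ∃ y ∈ Y, z = LeftBrace.star x y}

/-- An ideal of a left brace: an additive subgroup closed under all `λ_a` and
normal in `(A, ∘)`. -/
def IsBraceIdeal {A : Type*} [LeftBrace A] (I : AddSubgroup A) : Prop :=
  (∀ a : A, ∀ b ∈ I, a * b - a ∈ I) ∧ (∀ a : A, ∀ b ∈ I, a * b * a⁻¹ ∈ I)

/-- A brace is prime if the product of any two nonzero ideals is nonzero. -/
def IsPrimeBrace (A : Type*) [LeftBrace A] : Prop :=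
  ∀ I J : AddSubgroup A, IsBraceIdeal I → IsBraceIdeal J → I ≠ ⊥ → J ≠ ⊥ →
    starSpan I J ≠ ⊥

/-- Left chain of a nonassociative algebra given by a bilinear map. -/
def preLieL (R : Type*) [CommRing R] (V : Type*) [AddCommGroup V] [Module R V]
    (mul : V →ₗ[R] V →ₗ[R] V) : ℕ → Submodule R V
  | 0 => ⊤
  | 1 => ⊤
  | (n+2) => Submodule.span R
      {x : V | ∃ a : V, ∃ b ∈ preLieL R V mul (n+1), x = mul a b}

/-- Right chain of a nonassociative algebra given by a bilinear map. -/
def preLieR (R : Type*) [CommRing R] (V : Type*) [AddCommGroup V] [Module R V]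
    (mul : V →ₗ[R] V →ₗ[R] V) : ℕ → Submodule R V
  | 0 => ⊤
  | 1 => ⊤
  | (n+2) => Submodule.span R
      {x : V | ∃ a ∈ preLieR R V mul (n+1), ∃ b : V, x = mul a b}

/-- The defining relations of the group XIV on generators `P, Q, R, S`. -/
def XIVRelations {A : Type*} [LeftBrace A] (p : ℕ) (P Q R S : A) : Prop :=
  Q * P = P * Q ∧ Q * R = R * Q ∧ Q * S = S * Q ∧
  P * R = R * P ∧ P * S = S * P ∧ R * S = S * R * P ∧
  P ^ p = 1 ∧ Q ^ p = 1 ∧ R ^ p = 1 ∧ S ^ p = 1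

/-!
For a left brace, `λ_a x = a ∘ x - a` is a homomorphism from `(A, ∘)` to the additive
endomorphisms of `(A, +)`, and `a * x = λ_a x - x` is the commutator of `a` and `x` in the
semidirect product `(A, +) ⋊ (A, ∘)`. A subgroup `V ⊆ A * V` therefore lies in every term of the
lower central series of this group, which is a nilpotent `p`-group when `|A| = p^n`; so `V = 0`.
Hence the chain `A^k` strictly decreases until it reaches `0`, and `A^{n+1} = 0`.

Once `A^5 = 0` the formula is bookkeeping: `d := λ_{ab} c - λ_{ba} c = a*(b*c) - b*(a*c)` lies
in `A^3`, `a⁻¹∘b⁻¹∘a∘b * c = λ_{(ba)⁻¹} d`, and on `A^3` the inverse of `λ_g` is `x ↦ x - g * x`.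
-/

open scoped commutatorElement

namespace IsPGroup

variable {p : ℕ} [Fact p.Prime] {G M : Type*} [Group G] [AddGroup M] [Finite G] [Finite M]

theorem addSubgroup_eq_bot_of_le_closure_sub (hG : IsPGroup p G)
    (hM : IsPGroup p (Multiplicative M)) (φ : G →* AddMonoid.End M) {V : AddSubgroup M}
    (hV : V ≤ AddSubgroup.closure {x | ∃ g, ∃ v ∈ V, x = φ g v - v}) : V = ⊥ := by
  have hinv (g h : G) (hgh : g * h = 1) (x : M) : φ g (φ h x) = x := by
    change (φ g * φ h) x = x
    rw [← map_mul, hgh, map_one, AddMonoid.End.one_apply]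
  let ψ : G →* MulAut (Multiplicative M) :=
    { toFun := fun g =>
        { toFun := fun x => .ofAdd (φ g x.toAdd)
          invFun := fun x => .ofAdd (φ g⁻¹ x.toAdd)
          left_inv := fun x => by simp [hinv _ _ (inv_mul_cancel g)]
          right_inv := fun x => by simp [hinv _ _ (mul_inv_cancel g)]
          map_mul' := fun x y => by simp }
      map_one' := by ext; simp
      map_mul' := fun g h => by ext; simp }
  let H := Multiplicative M ⋊[ψ] G
  have hcomm (g : G) (v : M) : (SemidirectProduct.inl (Multiplicative.ofAdd (φ g v - v)) : H) =
      ⁅(SemidirectProduct.inr g : H), SemidirectProduct.inl (Multiplicative.ofAdd v)⁆ := by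
    rw [commutatorElement_def, ← map_inv, ← SemidirectProduct.inl_aut, ← map_inv, ← map_mul,
      sub_eq_add_neg]
    rfl
  have hlcs (n : ℕ) :
      V ≤ (((⊤ : Subgroup H).lowerCentralSeries n).comap SemidirectProduct.inl).toAddSubgroup' := by
    induction n with
    | zero => simp
    | succ n ih =>
      refine hV.trans ((AddSubgroup.closure_le _).2 ?_)
      rintro _ ⟨g, v, hv, rfl⟩
      rw [SetLike.mem_coe, Subgroup.mem_toAddSubgroup', Subgroup.mem_comap, hcomm,
        Subgroup.lowerCentralSeries_succ, Subgroup.commutator_comm]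
      exact Subgroup.commutator_mem_commutator (Subgroup.mem_top _) (ih hv)
  obtain ⟨m, hm⟩ := IsPGroup.iff_card.1 hM
  obtain ⟨k, hk⟩ := IsPGroup.iff_card.1 hG
  have hcard : Nat.card H = p ^ (m + k) := by rw [SemidirectProduct.card, hm, hk, pow_add]
  have : Finite H := Nat.finite_of_card_ne_zero (by simp [hcard, (Fact.out : p.Prime).ne_zero])
  obtain ⟨n, hn⟩ :=
    Subgroup.nilpotent_iff_lowerCentralSeries.1 (IsPGroup.of_card hcard).isNilpotent
  refine eq_bot_iff.2 fun v hv => ?_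
  have := hlcs n hv
  rw [hn, Subgroup.mem_toAddSubgroup', Subgroup.mem_comap, Subgroup.mem_bot,
    map_eq_one_iff _ SemidirectProduct.inl_injective] at this
  exact AddSubgroup.mem_bot.2 this

end IsPGroup

theorem AddSubgroup.eq_bot_of_strict_chain_of_card_eq_prime_pow {M : Type*} [AddGroup M]
    {p k : ℕ} (hp : p.Prime) (hM : Nat.card M = p ^ k) (H : ℕ → AddSubgroup M)
    (hle : ∀ n, H (n + 1) ≤ H n) (hne : ∀ n, H n ≠ ⊥ → H (n + 1) ≠ H n) : H k = ⊥ := by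
  have : Finite M := Nat.finite_of_card_ne_zero (by simp [hM, hp.ne_zero])
  have hdvd (n : ℕ) : Nat.card (H n) ∣ p ^ (k - n) := by
    induction n with
    | zero => exact hM ▸ AddSubgroup.card_addSubgroup_dvd_card (H 0)
    | succ n ih =>
      by_cases hbot : H n = ⊥
      · rw [le_bot_iff.1 ((hle n).trans hbot.le), AddSubgroup.card_bot]
        exact one_dvd _
      have hsub := AddSubgroup.card_dvd_of_le (hle n)
      obtain ⟨i, hi, hci⟩ := (Nat.dvd_prime_pow hp).1 ih
      obtain ⟨j, -, hcj⟩ := (Nat.dvd_prime_pow hp).1 (hsub.trans ih)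
      rw [hci, hcj, Nat.pow_dvd_pow_iff_le_right hp.one_lt] at hsub
      have hji : j ≠ i := by
        rintro rfl
        exact hne n hbot (AddSubgroup.eq_of_le_of_card_ge (hle n) (by rw [hci, hcj]))
      rw [hcj]
      exact pow_dvd_pow p (by omega)
  rw [← AddSubgroup.card_eq_one]
  simpa using hdvd k

namespace LeftBrace

variable {A : Type*} [LeftBrace A]

theorem mul_zero_eq_self (a : A) : a * 0 = a := by
  have h := mul_add_eq a 0 0
  rw [add_zero] at h
  exact (add_left_cancel h).symm

theorem zero_eq_one : (0 : A) = 1 := by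
  simpa using mul_zero_eq_self (1 : A)

def lambdaHom (a : A) : A →+ A :=
  AddMonoidHom.mk' (fun x => a * x - a) fun x y => by
    rw [eq_sub_of_add_eq (mul_add_eq a x y)]
    abel

theorem lambdaHom_apply (a x : A) : lambdaHom a x = a * x - a := rfl

def lambda : A →* AddMonoid.End A where
  toFun := lambdaHom
  map_one' := by
    ext x
    change 1 * x - 1 = x
    rw [one_mul, ← zero_eq_one, sub_zero]
  map_mul' a b := by
    ext x
    have h := map_sub (lambdaHom a) (b * x) b
    simp only [lambdaHom_apply] at h
    change (a * b) * x - a * b = a * (b * x - b) - a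
    rw [h, mul_assoc]
    abel

theorem lambda_mul_apply (a b x : A) : lambda (a * b) x = lambda a (lambda b x) := by
  rw [map_mul]
  rfl

theorem lambda_inv_apply_lambda (a x : A) : lambda a⁻¹ (lambda a x) = x := by
  rw [← lambda_mul_apply, inv_mul_cancel, map_one, AddMonoid.End.one_apply]

theorem star_eq_lambda_sub (a x : A) : star a x = lambda a x - x := rfl

theorem lambda_apply_eq_add_star (a x : A) : lambda a x = x + star a x := by
  rw [star_eq_lambda_sub]
  abel

theorem star_sub (a x y : A) : star a (x - y) = star a x - star a y := by
  rw [star_eq_lambda_sub, star_eq_lambda_sub, star_eq_lambda_sub, map_sub]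
  abel

theorem star_mul_left (a b x : A) : star (a * b) x = star a x + star b x + star a (star b x) := by
  rw [star_eq_lambda_sub, lambda_mul_apply, lambda_apply_eq_add_star b, map_add,
    lambda_apply_eq_add_star, lambda_apply_eq_add_star]
  abel

theorem star_mem_lpow (a : A) {n : ℕ} {x : A} (hx : x ∈ lpow A n) :
    star a x ∈ lpow A (n + 1) :=
  match n with
  | 0 => AddSubgroup.mem_top _
  | _ + 1 => AddSubgroup.subset_closure ⟨a, x, hx, rfl⟩

theorem lpow_succ_le (n : ℕ) : lpow A (n + 1) ≤ lpow A n := by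
  induction n with
  | zero => exact le_top
  | succ n ih =>
    match n with
    | 0 => exact le_top
    | n + 1 =>
      exact (AddSubgroup.closure_le _).2 fun _ ⟨a, x, hx, hax⟩ => hax ▸ star_mem_lpow a (ih hx)

theorem lpow_succ_ne_of_ne_bot {p : ℕ} [Fact p.Prime] [Finite A] (hA : IsPGroup p A)
    (hA' : IsPGroup p (Multiplicative A)) {n : ℕ} (hn : lpow A (n + 1) ≠ ⊥) :
    lpow A (n + 2) ≠ lpow A (n + 1) := fun heq =>
  hn (hA.addSubgroup_eq_bot_of_le_closure_sub hA' lambda heq.ge)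

theorem lpow_eq_bot_of_card_eq_prime_pow {p k : ℕ} (hp : p.Prime)
    (hcard : Nat.card A = p ^ k) : lpow A (k + 1) = ⊥ := by
  have : Fact p.Prime := ⟨hp⟩
  have : Finite A := Nat.finite_of_card_ne_zero (by simp [hcard, hp.ne_zero])
  have hA' : IsPGroup p (Multiplicative A) :=
    IsPGroup.of_card ((Nat.card_congr Multiplicative.toAdd).trans hcard)
  exact AddSubgroup.eq_bot_of_strict_chain_of_card_eq_prime_pow hp hcard (fun n => lpow A (n + 1))
    (fun n => lpow_succ_le (n + 1))
    (fun _ => lpow_succ_ne_of_ne_bot (IsPGroup.of_card hcard) hA')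

theorem star_star_eq_zero_of_mem_lpow_three (h5 : lpow A 5 = ⊥) {x : A} (hx : x ∈ lpow A 3)
    (a b : A) : star a (star b x) = 0 := by
  have h : star a (star b x) ∈ lpow A 5 := star_mem_lpow a (star_mem_lpow b hx)
  rwa [h5, AddSubgroup.mem_bot] at h

theorem lambda_inv_apply_of_mem_lpow_three (h5 : lpow A 5 = ⊥) {x : A} (hx : x ∈ lpow A 3)
    (g : A) : lambda g⁻¹ x = x - star g x := by
  have h : lambda g (x - star g x) = x := by
    rw [lambda_apply_eq_add_star, star_sub, star_star_eq_zero_of_mem_lpow_three h5 hx]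
    abel
  rw [← h, lambda_inv_apply_lambda, h]

theorem star_commutator_eq (h5 : lpow A 5 = ⊥) (a b c : A) :
    star (a⁻¹ * b⁻¹ * a * b) c =
      star a (star b c) - star b (star a c)
        + star a (star b (star a c)) + star b (star b (star a c))
        - star b (star a (star b c)) - star a (star a (star b c)) := by
  have hc : c ∈ lpow A 1 := AddSubgroup.mem_top c
  set d := star a (star b c) - star b (star a c) with hd_def
  have hd : d ∈ lpow A 3 :=
    sub_mem (star_mem_lpow a (star_mem_lpow b hc)) (star_mem_lpow b (star_mem_lpow a hc))
  have hlam : lambda (a * b) c = lambda (b * a) c + d := by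
    simp only [lambda_apply_eq_add_star, star_mul_left, hd_def]
    abel
  calc star (a⁻¹ * b⁻¹ * a * b) c = lambda (b * a)⁻¹ d := by
        rw [star_eq_lambda_sub, show a⁻¹ * b⁻¹ * a * b = (b * a)⁻¹ * (a * b) by group,
          lambda_mul_apply, hlam, map_add, lambda_inv_apply_lambda]
        abel
    _ = d - star b d - star a d := by
        rw [lambda_inv_apply_of_mem_lpow_three h5 hd, star_mul_left,
          star_star_eq_zero_of_mem_lpow_three h5 hd]
        abel
    _ = _ := by
        rw [hd_def, star_sub, star_sub]
        abel

end LeftBrace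

open LeftBrace in
/-- the commutator formula for the star operation in an `𝔽ₚ`-brace of
cardinality `p^4`. -/
theorem statement1 (p : ℕ) (hp : p.Prime) (A : Type*) [FpBrace p A]
    (hcard : Nat.card A = p ^ 4) :
    ∀ a b c : A,
      star (a⁻¹ * b⁻¹ * a * b) c =
        star a (star b c) - star b (star a c)
          + star a (star b (star a c)) + star b (star b (star a c))
          - star b (star a (star b c)) - star a (star a (star b c)) :=
  star_commutator_eq (lpow_eq_bot_of_card_eq_prime_pow hp hcard)
end

section
/- Let p > 3 be a prime and let A be an 𝔽_p-brace of cardinality p^4 whose multiplicative group (A,∘) is the group XV, with generators P, Q, R, S ∈ A satisfying the XV relations. Then Q ∈ A^2, Q*A^i ⊆ A^{i+2} for all i ≥ 1, and Q*Q ∈ Q*A^2 ⊆ A^4. -/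
namespace XVAux

open LeftBrace

variable {A : Type*} [LeftBrace A]

/-- The lambda map `x ↦ a∘x - a`, as an additive homomorphism. -/
def lam (a : A) : A →+ A :=
  AddMonoidHom.mk' (fun x => a * x - a) (by
    intro b c
    have h : a * (b + c) = a * b + a * c - a := by
      rw [← LeftBrace.mul_add_eq a b c]; abel
    simp only [h]; abel)

lemma star_eq_lam (a b : A) : star a b = lam a b - b := rfl

lemma lam_mul (a b c : A) : lam (a * b) c = lam a (lam b c) := by
  have h : lam a (lam b c) = lam a (b * c) - lam a b := by
    have h0 : (lam b c : A) = b * c - b := rfl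
    rw [h0, map_sub]
  rw [h]
  show (a * b) * c - (a * b) = (a * (b * c) - a) - (a * b - a)
  rw [mul_assoc]; abel

lemma star_mul_left (a b c : A) :
    star (a * b) c = star a (star b c) + star a c + star b c := by
  simp only [star_eq_lam, map_sub, lam_mul]
  abel

lemma lpow_succ_succ (n : ℕ) : lpow A (n + 2) = AddSubgroup.closure
    {x : A | ∃ a : A, ∃ b ∈ lpow A (n + 1), x = LeftBrace.star a b} := by
  rw [lpow]

lemma lpow_one : lpow A 1 = ⊤ := by rw [lpow]

lemma star_mem (n : ℕ) (a : A) {x : A} (hx : x ∈ lpow A (n + 1)) :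
    star a x ∈ lpow A (n + 2) := by
  rw [lpow_succ_succ]
  exact AddSubgroup.subset_closure ⟨a, x, hx, rfl⟩

lemma lpow_le (n : ℕ) : lpow A (n + 1) ≤ lpow A n := by
  induction n with
  | zero => exact le_top
  | succ m ih =>
    cases m with
    | zero => rw [lpow_one]; exact le_top
    | succ k =>
      rw [lpow_succ_succ (k + 1)]
      refine (AddSubgroup.closure_le _).mpr ?_
      rintro x ⟨a, b, hb, rfl⟩
      exact star_mem k a (ih hb)

end XVAux

open LeftBrace in
/-- with multiplicative group XV, `Q ∈ A²`, `Q * Aⁱ ⊆ A^{i+2}`, and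
`Q * Q ∈ Q * A² ⊆ A⁴`. -/
theorem statement2 (p : ℕ) (hp : p.Prime) (hp3 : 3 < p) (A : Type*) [FpBrace p A]
    (P Q R S : A) (hXV : IsXVBrace p A P Q R S) :
    Q ∈ lpow A 2 ∧
    (∀ i, 1 ≤ i → ∀ x ∈ lpow A i, star Q x ∈ lpow A (i + 2)) ∧
    (∀ x ∈ lpow A 2, star Q x ∈ lpow A 4) ∧
    star Q Q ∈ lpow A 4 := by
  obtain ⟨hcard, hgen, h1, h2, h3, h4, h5, h6, hPp, hQp, hRp, hSp⟩ := hXV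
  have star2 : ∀ a b : A, star a b ∈ lpow A 2 := by
    intro a b
    have hb : b ∈ lpow A 1 := by rw [XVAux.lpow_one]; trivial
    exact XVAux.star_mem 0 a hb
  have hQmem : Q ∈ lpow A 2 := by
    have hq : Q = star R S - star S R - star (S * R) Q := by
      simp only [LeftBrace.star]
      rw [← h6]; abel
    rw [hq]
    exact sub_mem (sub_mem (star2 R S) (star2 S R)) (star2 (S * R) Q)
  have keyQ : ∀ n : ℕ, ∀ x ∈ lpow A (n + 1), star Q x ∈ lpow A (n + 3) := by
    intro n x hx
    have e1 : star (R * S) x = star R (star S x) + star R x + star S x :=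
      XVAux.star_mul_left R S x
    have e2 : star (S * R * Q) x
        = star (S * R) (star Q x) + star (S * R) x + star Q x :=
      XVAux.star_mul_left (S * R) Q x
    have e3 : star (S * R) (star Q x)
        = star S (star R (star Q x)) + star S (star Q x) + star R (star Q x) :=
      XVAux.star_mul_left S R (star Q x)
    have e4 : star (S * R) x = star S (star R x) + star S x + star R x :=
      XVAux.star_mul_left S R x
    have hq : star Q x
        = star (R * S) x - (star (S * R) (star Q x) + star (S * R) x) := by
      rw [h6, e2]; abel
    rw [e1, e3, e4] at hq
    have hq' : star Q x
        = star R (star S x) - star S (star R (star Q x)) - star S (star Q x)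
          - star R (star Q x) - star S (star R x) := hq.trans (by abel)
    have hqx2 : star Q x ∈ lpow A (n + 2) := XVAux.star_mem n Q hx
    have hqx1 : star Q x ∈ lpow A (n + 1) := XVAux.lpow_le (n + 1) hqx2
    rw [hq']
    exact sub_mem (sub_mem (sub_mem (sub_mem
      (XVAux.star_mem (n + 1) R (XVAux.star_mem n S hx))
      (XVAux.star_mem (n + 1) S (XVAux.star_mem n R hqx1)))
      (XVAux.star_mem (n + 1) S hqx2))
      (XVAux.star_mem (n + 1) R hqx2))
      (XVAux.star_mem (n + 1) S (XVAux.star_mem n R hx))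
  refine ⟨hQmem, ?_, ?_, ?_⟩
  · intro i hi x hx
    obtain ⟨n, rfl⟩ : ∃ n, i = n + 1 := ⟨i - 1, by omega⟩
    exact keyQ n x hx
  · intro x hx
    exact keyQ 1 x hx
  · exact keyQ 1 Q hQmem
end

section
/- Let p > 3 be a prime and let A be an 𝔽_p-brace whose multiplicative group (A,∘) is the group XV, with generators P, Q, R, S ∈ A satisfying the XV relations. If R ∈ A^2, then the brace A^2 is commutative: x∘y = y∘x (equivalently x*y = y*x) for all x, y ∈ A^2, and in fact A^2 = {P^i∘Q^j∘R^t : 0 < i, j, t ≤ p} (powers with respect to ∘). -/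
/-!
Modulo `A²` the brace product `a∘b = a*b + a + b` becomes addition, so `(A,∘) → A/A²` is a
homomorphism onto an abelian group. The relations `Q∘S = S∘Q∘P` and `R∘S = S∘R∘Q` therefore put
`P` and `Q` in `A²`, and together with `R ∈ A²` the abelian subgroup `H = ⟨P, Q, R⟩` lies in `A²`.
Conjugation by `S` preserves `H`, so `A = H⟨S⟩` and `|H| ≥ p³`. On the other hand `A² ≠ A`: the
`p`-group `(A,∘)` acts on the dual of `A` through `λ`, and a nonzero fixed functional vanishes on
every `a*b = λ_a(b) - b`. Hence `|A²| ≤ p³`, so `A² = H`.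
-/

namespace LeftBrace

variable {A : Type*} [LeftBrace A]

theorem one_eq_zero : (1 : A) = 0 := by
  simpa using mul_add_eq (1 : A) 0 0

theorem mul_eq_star_add_add (a b : A) : a * b = star a b + a + b := by
  rw [star]; abel

theorem star_mem_lpow_two (a b : A) : star a b ∈ lpow A 2 :=
  AddSubgroup.subset_closure ⟨a, b, AddSubgroup.mem_top b, rfl⟩

def lam (a : A) : A →+ A :=
  AddMonoidHom.mk' (fun b => a * b - a) fun b c => by
    linear_combination (norm := abel) mul_add_eq a b c

theorem lam_apply (a b : A) : lam a b = a * b - a := rfl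

theorem lam_one : lam (1 : A) = AddMonoidHom.id A := by
  ext b; simp [lam_apply, one_eq_zero]

theorem lam_mul (a b : A) : lam (a * b) = (lam a).comp (lam b) := by
  ext c
  change _ = lam a (b * c - b)
  rw [map_sub, lam_apply, lam_apply, lam_apply, mul_assoc]
  abel

def toQuotientLpowTwo : A →* Multiplicative (A ⧸ lpow A 2) where
  toFun a := Multiplicative.ofAdd a
  map_one' := by rw [one_eq_zero]; rfl
  map_mul' a b := by
    rw [mul_eq_star_add_add, ← ofAdd_add]
    congr 1
    simp [(QuotientAddGroup.eq_zero_iff _).mpr (star_mem_lpow_two a b), add_assoc]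

theorem mem_ker_toQuotientLpowTwo {x : A} : x ∈ toQuotientLpowTwo.ker ↔ x ∈ lpow A 2 :=
  QuotientAddGroup.eq_zero_iff x

def lamRep (p : ℕ) [Module (ZMod p) A] : Representation (ZMod p) A A where
  toFun a := (lam a).toZModLinearMap p
  map_one' := by ext; simp [lam_one]
  map_mul' a b := by ext; simp [lam_mul]

theorem lpow_two_ne_top (p : ℕ) [Fact p.Prime] [Module (ZMod p) A] [Finite A] [Nontrivial A] :
    lpow A 2 ≠ ⊤ := by
  let _ : MulAction A (Module.Dual (ZMod p) A) := MulAction.compHom _ (lamRep p).dual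
  have : Module.Finite (ZMod p) A := Module.Finite.of_finite
  have hA : IsPGroup p A :=
    IsPGroup.of_card (Module.natCard_eq_pow_finrank.trans (by rw [Nat.card_zmod]))
  have : Finite (Module.Dual (ZMod p) A) := Module.finite_of_finite (ZMod p)
  have hD : p ∣ Nat.card (Module.Dual (ZMod p) A) := by
    rw [Module.natCard_eq_pow_finrank (K := ZMod p), Nat.card_zmod, Subspace.dual_finrank_eq]
    exact dvd_pow_self p Module.finrank_pos.ne'
  obtain ⟨f, hf, hf0⟩ := hA.exists_fixed_point_of_prime_dvd_card_of_fixed_point _ hD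
    (a := 0) fun a => map_zero ((lamRep p).dual a)
  have hstar : ∀ a b, f (star a b) = 0 := by
    intro a b
    have h := LinearMap.congr_fun (hf a⁻¹) b
    change f (lam a⁻¹⁻¹ b) = f b at h
    rw [inv_inv, lam_apply] at h
    rw [star, map_sub, h, sub_self]
  have hle : lpow A 2 ≤ (LinearMap.ker f).toAddSubgroup := by
    refine (AddSubgroup.closure_le _).mpr ?_
    rintro _ ⟨a, b, -, rfl⟩
    exact hstar a b
  intro htop
  refine hf0 (LinearMap.ext fun x => ?_)
  exact (hle (htop ▸ AddSubgroup.mem_top x) : f x = 0).symm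
end LeftBrace

section GroupTheory

open scoped Pointwise

variable {G : Type*} [Group G]

theorem MonoidHom.mem_ker_of_mul_eq_mul_mul {C : Type*} [CommGroup C] (φ : G →* C) {x y z : G}
    (h : x * y = y * x * z) : z ∈ φ.ker := by
  have h' := congrArg φ h
  rw [map_mul, map_mul, map_mul, mul_comm (φ y)] at h'
  exact left_eq_mul.mp h'

theorem triple_pow_mul {a b c : G} (hab : Commute a b) (hac : Commute a c) (hbc : Commute b c)
    (i j t i' j' t' : ℕ) :
    a ^ i * b ^ j * c ^ t * (a ^ i' * b ^ j' * c ^ t') =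
      a ^ (i + i') * b ^ (j + j') * c ^ (t + t') := by
  simp only [pow_add, mul_assoc]
  rw [((hac.symm).pow_pow t i').left_comm, ((hab.symm).pow_pow j i').left_comm,
    ((hbc.symm).pow_pow t j').left_comm]

theorem mem_closure_triple_iff [Finite G] {a b c x : G} (hab : Commute a b) (hac : Commute a c)
    (hbc : Commute b c) :
    x ∈ Subgroup.closure {a, b, c} ↔ ∃ i j t : ℕ, x = a ^ i * b ^ j * c ^ t := by
  constructor
  · intro hx
    rw [← Subgroup.mem_toSubmonoid, Subgroup.closure_toSubmonoid_of_finite] at hx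
    induction hx using Submonoid.closure_induction with
    | mem x hx =>
      rcases hx with rfl | rfl | rfl
      · exact ⟨1, 0, 0, by simp⟩
      · exact ⟨0, 1, 0, by simp⟩
      · exact ⟨0, 0, 1, by simp⟩
    | one => exact ⟨0, 0, 0, by simp⟩
    | mul x y _ _ hx hy =>
      obtain ⟨i, j, t, rfl⟩ := hx
      obtain ⟨i', j', t', rfl⟩ := hy
      exact ⟨i + i', j + j', t + t', triple_pow_mul hab hac hbc ..⟩
  · rintro ⟨i, j, t, rfl⟩
    have mem {g} (hg : g ∈ ({a, b, c} : Set G)) := Subgroup.subset_closure hg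
    exact mul_mem (mul_mem (pow_mem (mem (by simp)) i) (pow_mem (mem (by simp)) j))
      (pow_mem (mem (by simp)) t)

theorem exists_pow_eq_pow_of_pow_eq_one {p : ℕ} (hp : 0 < p) {g : G} (hg : g ^ p = 1) (n : ℕ) :
    ∃ m, 0 < m ∧ m ≤ p ∧ g ^ n = g ^ m := by
  have hmod : g ^ n = g ^ (n % p) := by
    conv_lhs => rw [← Nat.mod_add_div n p, pow_add, pow_mul, hg, one_pow, mul_one]
  rcases (n % p).eq_zero_or_pos with h | h
  · exact ⟨p, hp, le_rfl, by rw [hmod, h, pow_zero, hg]⟩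
  · exact ⟨n % p, h, (Nat.mod_lt n hp).le, hmod⟩

theorem coe_closure_triple [Finite G] {p : ℕ} (hp : 0 < p) {a b c : G} (hab : Commute a b)
    (hac : Commute a c) (hbc : Commute b c) (ha : a ^ p = 1) (hb : b ^ p = 1) (hc : c ^ p = 1) :
    (Subgroup.closure {a, b, c} : Set G) =
      {x | ∃ i j t : ℕ, 0 < i ∧ i ≤ p ∧ 0 < j ∧ j ≤ p ∧ 0 < t ∧ t ≤ p ∧
        x = a ^ i * b ^ j * c ^ t} := by
  ext x
  simp only [SetLike.mem_coe, mem_closure_triple_iff hab hac hbc, Set.mem_ofPred_eq]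
  constructor
  · rintro ⟨i, j, t, rfl⟩
    obtain ⟨i', hi, hip, hi'⟩ := exists_pow_eq_pow_of_pow_eq_one hp ha i
    obtain ⟨j', hj, hjp, hj'⟩ := exists_pow_eq_pow_of_pow_eq_one hp hb j
    obtain ⟨t', ht, htp, ht'⟩ := exists_pow_eq_pow_of_pow_eq_one hp hc t
    exact ⟨i', j', t', hi, hip, hj, hjp, ht, htp, by rw [hi', hj', ht']⟩
  · rintro ⟨i, j, t, -, -, -, -, -, -, rfl⟩
    exact ⟨i, j, t, rfl⟩

theorem Subgroup.mem_normalizer_closure_of_forall_conj_mem [Finite G] {s : Set G} {g : G}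
    (h : ∀ x ∈ s, g * x * g⁻¹ ∈ closure s) : g ∈ normalizer (closure s : Set G) := by
  refine mem_normalizer_fintype fun n hn => ?_
  have hmap : (closure s).map (MulAut.conj g).toMonoidHom ≤ closure s := by
    rw [MonoidHom.map_closure, closure_le]
    rintro _ ⟨x, hx, rfl⟩
    exact h x hx
  exact hmap ⟨n, hn, rfl⟩

theorem Subgroup.card_le_card_mul_orderOf (N : Subgroup G) {s : G}
    (hs : s ∈ normalizer (N : Set G)) (htop : N ⊔ zpowers s = ⊤) :
    Nat.card G ≤ Nat.card N * orderOf s := by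
  have hmul : ((N ⊔ zpowers s : Subgroup G) : Set G) = (N : Set G) * (zpowers s : Set G) :=
    coe_mul_of_right_le_normalizer_left N _ (zpowers_le.mpr hs)
  rw [htop, coe_top] at hmul
  calc Nat.card G = Nat.card (Set.univ : Set G) := Nat.card_univ.symm
    _ = Nat.card ((N : Set G) * (zpowers s : Set G)) := by rw [hmul]
    _ ≤ Nat.card N * Nat.card (zpowers s) := Set.natCard_mul_le
    _ = Nat.card N * orderOf s := by rw [Nat.card_zpowers]

theorem AddSubgroup.card_le_pow_of_ne_top {A : Type*} [AddGroup A] {p n : ℕ} (hp : p.Prime)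
    (hA : Nat.card A = p ^ (n + 1)) {K : AddSubgroup A} (hK : K ≠ ⊤) : Nat.card K ≤ p ^ n := by
  have : Finite A := Nat.finite_of_card_ne_zero (by simp [hA, hp.ne_zero])
  obtain ⟨k, hk, hKk⟩ := (Nat.dvd_prime_pow hp).mp (hA ▸ K.card_addSubgroup_dvd_card)
  have hkn : k ≠ n + 1 := fun h => hK (K.eq_top_of_card_eq (by rw [hKk, hA, h]))
  rw [hKk]
  exact Nat.pow_le_pow_right hp.pos (by omega)

end GroupTheory

section XV

open LeftBrace Subgroup

namespace XVRelations

variable {A : Type*} [LeftBrace A] {p : ℕ} {P Q R S : A}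

theorem closure_le_ker (h : XVRelations p P Q R S) (hR : R ∈ lpow A 2) :
    closure {P, Q, R} ≤ (toQuotientLpowTwo (A := A)).ker := by
  obtain ⟨hQS, -, -, -, -, hRS, -⟩ := h
  rw [closure_le]
  rintro x (rfl | rfl | rfl)
  · exact toQuotientLpowTwo.mem_ker_of_mul_eq_mul_mul hQS
  · exact toQuotientLpowTwo.mem_ker_of_mul_eq_mul_mul hRS
  · exact mem_ker_toQuotientLpowTwo.mpr hR

theorem inv_mem_normalizer_closure [Finite A] (h : XVRelations p P Q R S) :
    S⁻¹ ∈ normalizer (closure {P, Q, R} : Set A) := by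
  obtain ⟨hQS, -, hPS, -, -, hRS, -⟩ := h
  have mem {x : A} (hx : x ∈ ({P, Q, R} : Set A)) := subset_closure hx
  refine mem_normalizer_closure_of_forall_conj_mem ?_
  rintro x (rfl | rfl | rfl) <;> rw [inv_inv, mul_assoc]
  · rw [hPS, inv_mul_cancel_left]
    exact mem (by simp)
  · rw [hQS, mul_assoc, inv_mul_cancel_left]
    exact mul_mem (mem (by simp)) (mem (by simp))
  · rw [hRS, mul_assoc, inv_mul_cancel_left]
    exact mul_mem (mem (by simp)) (mem (by simp))

theorem commute_of_mem_closure [Finite A] (h : XVRelations p P Q R S) {x y : A}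
    (hx : x ∈ closure {P, Q, R}) (hy : y ∈ closure {P, Q, R}) : x * y = y * x := by
  obtain ⟨-, hQR, -, hPQ, hPR, -⟩ := h
  obtain ⟨i, j, t, rfl⟩ := (mem_closure_triple_iff hPQ hPR hQR).mp hx
  obtain ⟨i', j', t', rfl⟩ := (mem_closure_triple_iff hPQ hPR hQR).mp hy
  rw [triple_pow_mul hPQ hPR hQR, triple_pow_mul hPQ hPR hQR, i.add_comm, j.add_comm, t.add_comm]

theorem coe_closure [Finite A] (hp : 0 < p) (h : XVRelations p P Q R S) :
    (closure {P, Q, R} : Set A) =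
      {x | ∃ i j t : ℕ, 0 < i ∧ i ≤ p ∧ 0 < j ∧ j ≤ p ∧ 0 < t ∧ t ≤ p ∧
        x = P ^ i * Q ^ j * R ^ t} := by
  obtain ⟨-, hQR, -, hPQ, hPR, -, hPp, hQp, hRp, -⟩ := h
  exact coe_closure_triple hp hPQ hPR hQR hPp hQp hRp

end XVRelations

theorem IsXVBrace.pow_three_le_card_closure {A : Type*} [LeftBrace A] {p : ℕ} {P Q R S : A}
    (hp : 0 < p) (h : IsXVBrace p A P Q R S) : p ^ 3 ≤ Nat.card (closure {P, Q, R}) := by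
  obtain ⟨hcard, hgen, hrel⟩ := h
  have : Finite A := Nat.finite_of_card_ne_zero (by simp [hcard, hp.ne'])
  have hS : S ∈ normalizer (closure {P, Q, R} : Set A) := by
    simpa using inv_mem hrel.inv_mem_normalizer_closure
  have htop : closure {P, Q, R} ⊔ zpowers S = ⊤ := by
    rw [eq_top_iff, ← hgen, closure_le]
    rintro _ (rfl | rfl | rfl | rfl)
    iterate 3 exact mem_sup_left (subset_closure (by simp))
    exact mem_sup_right (mem_zpowers _)
  obtain ⟨-, -, -, -, -, -, -, -, -, hSp⟩ := hrel
  have hord : orderOf S ≤ p := orderOf_le_of_pow_eq_one hp hSp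
  have hle := card_le_card_mul_orderOf _ hS htop
  rw [hcard] at hle
  refine Nat.le_of_mul_le_mul_right ?_ hp
  calc p ^ 3 * p = p ^ 4 := by ring
    _ ≤ _ := hle.trans (Nat.mul_le_mul_left _ hord)

end XV

open LeftBrace in
theorem statement7_general (p : ℕ) (hp : p.Prime) (A : Type*) [FpBrace p A]
    (P Q R S : A) (hXV : IsXVBrace p A P Q R S) (hR : R ∈ lpow A 2) :
    (∀ x ∈ lpow A 2, ∀ y ∈ lpow A 2, x * y = y * x ∧ star x y = star y x) ∧
    (lpow A 2 : Set A) =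
      {x : A | ∃ i j t : ℕ, 0 < i ∧ i ≤ p ∧ 0 < j ∧ j ≤ p ∧ 0 < t ∧ t ≤ p ∧
        x = P ^ i * Q ^ j * R ^ t} := by
  have : Fact p.Prime := ⟨hp⟩
  obtain ⟨hcard, -, hrel⟩ := id hXV
  have : Finite A := Nat.finite_of_card_ne_zero (by simp [hcard, hp.ne_zero])
  have : Nontrivial A := Finite.one_lt_card_iff_nontrivial.mp
    (by rw [hcard]; exact one_lt_pow₀ hp.one_lt (by norm_num))
  have hA2 : (lpow A 2 : Set A) = Subgroup.closure {P, Q, R} := by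
    have hle : (Subgroup.closure {P, Q, R} : Set A) ⊆ lpow A 2 :=
      fun x hx => mem_ker_toQuotientLpowTwo.mp (hrel.closure_le_ker hR hx)
    refine (Set.eq_of_subset_of_ncard_le hle ?_ (Set.toFinite _)).symm
    rw [← Nat.card_coe_set_eq, ← Nat.card_coe_set_eq]
    exact (AddSubgroup.card_le_pow_of_ne_top hp hcard (lpow_two_ne_top p)).trans
      (hXV.pow_three_le_card_closure hp.pos)
  refine ⟨fun x hx y hy => ?_, hA2.trans (hrel.coe_closure hp.pos)⟩
  have hxy := hrel.commute_of_mem_closure (hA2.subset hx) (hA2.subset hy)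
  exact ⟨hxy, by rw [LeftBrace.star, LeftBrace.star, hxy, sub_right_comm]⟩

open LeftBrace in
/-- if `R ∈ A²`, then the brace `A²` is commutative and
`A² = {Pⁱ∘Qʲ∘Rᵗ : 0 < i, j, t ≤ p}`. -/
theorem statement7 (p : ℕ) (hp : p.Prime) (hp3 : 3 < p) (A : Type*) [FpBrace p A]
    (P Q R S : A) (hXV : IsXVBrace p A P Q R S) (hR : R ∈ lpow A 2) :
    (∀ x ∈ lpow A 2, ∀ y ∈ lpow A 2, x * y = y * x ∧ star x y = star y x) ∧
    (lpow A 2 : Set A) =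
      {x : A | ∃ i j t : ℕ, 0 < i ∧ i ≤ p ∧ 0 < j ∧ j ≤ p ∧ 0 < t ∧ t ≤ p ∧
        x = P ^ i * Q ^ j * R ^ t} :=
  statement7_general p hp A P Q R S hXV hR
end

section
/- Let p > 3 be a prime. Let A be an 𝔽_p-brace whose additive group is a 4-dimensional 𝔽_p-vector space with basis P, Q, R, S, and suppose P, Q, R, S satisfy the Multiplicative Table with parameters y, i, k ∈ 𝔽_p, y ≠ 0. Then the brace A is not right nilpotent. -/
/-! The relations `S * Q = -P` and `P * R = y • S` let `P` and `S` generate each other one step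
further down the right chain `A^{(n)}`, so both lie in every `A^{(n)}`; since the basis vector `S`
is nonzero, no `A^{(n)}` vanishes. -/

namespace LeftBrace

variable {A : Type*} [LeftBrace A]

theorem star_mem_rpow_succ {n : ℕ} {a : A} (ha : a ∈ rpow A n) (b : A) :
    star a b ∈ rpow A (n + 1) :=
  match n with
  | 0 => AddSubgroup.mem_top _
  | _ + 1 => AddSubgroup.subset_closure ⟨a, ha, b, rfl⟩

theorem not_isRightNilpotent_of_forall_mem_rpow {x : A} (hx : x ≠ 0)
    (h : ∀ n, x ∈ rpow A n) : ¬ IsRightNilpotent A := by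
  rintro ⟨n, hn⟩
  exact hx (AddSubgroup.mem_bot.mp (hn ▸ h n))

theorem mem_rpow_of_star_eq_neg_of_star_eq_smul {p : ℕ} [Fact p.Prime] [Module (ZMod p) A]
    {P Q R S : A} {y : ZMod p} (hy : y ≠ 0) (hSQ : star S Q = -P) (hPR : star P R = y • S) :
    ∀ n, P ∈ rpow A n ∧ S ∈ rpow A n
  | 0 => ⟨AddSubgroup.mem_top _, AddSubgroup.mem_top _⟩
  | n + 1 => by
    obtain ⟨hP, hS⟩ := mem_rpow_of_star_eq_neg_of_star_eq_smul hy hSQ hPR n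
    constructor
    · simpa [hSQ] using neg_mem (star_mem_rpow_succ hS Q)
    · have hyS : y • S ∈ AddSubgroup.toZModSubmodule p (rpow A (n + 1)) :=
        hPR ▸ star_mem_rpow_succ hP R
      exact (Submodule.smul_mem_iff _ hy).1 hyS

end LeftBrace

theorem statement15_general (p : ℕ) (hp : p.Prime) (A : Type*) [FpBrace p A]
    (P Q R S : A) (B : Module.Basis (Fin 4) (ZMod p) A)
    (hB : B 0 = P ∧ B 1 = Q ∧ B 2 = R ∧ B 3 = S)
    (y i k : ZMod p) (hy : y ≠ 0) (htable : MultTable P Q R S y i k) :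
    ¬ IsRightNilpotent A := by
  have : Fact p.Prime := ⟨hp⟩
  obtain ⟨-, -, -, hS⟩ := hB
  obtain ⟨-, -, hPR, -, -, -, -, -, -, -, -, -, -, hSQ, -, -⟩ := htable
  have hS0 : S ≠ 0 := hS ▸ B.ne_zero 3
  exact LeftBrace.not_isRightNilpotent_of_forall_mem_rpow hS0 fun n ↦
    (LeftBrace.mem_rpow_of_star_eq_neg_of_star_eq_smul hy hSQ hPR n).2

/-- an `𝔽ₚ`-brace with basis `P, Q, R, S` satisfying the Multiplicative
Table is not right nilpotent. -/
theorem statement15 (p : ℕ) (hp : p.Prime) (hp3 : 3 < p) (A : Type*) [FpBrace p A]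
    (P Q R S : A) (B : Module.Basis (Fin 4) (ZMod p) A)
    (hB : B 0 = P ∧ B 1 = Q ∧ B 2 = R ∧ B 3 = S)
    (y i k : ZMod p) (hy : y ≠ 0) (htable : MultTable P Q R S y i k) :
    ¬ IsRightNilpotent A :=
  statement15_general p hp A P Q R S B hB y i k hy htable
end

section
/- Let p > 3 be a prime and let j, k, y ∈ 𝔽_p with y ≠ 0. Let V be the 4-dimensional 𝔽_p-vector space with basis P, Q, R, S, equipped with the bilinear multiplication determined on basis elements by PS = SS = QS = RS = PP = SP = QP = PQ = RQ = QR = 0, RR = jP + kS, QQ = −yS, RP = yS, SQ = −P, PR = yS, SR = −Q. Then V is a pre-Lie algebra, i.e., (ab)c − a(bc) = (ba)c − b(ac) for all a, b, c ∈ V; moreover V is left nilpotent but not right nilpotent. -/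
/-!
The multiplication is "filtered" on the left: giving `R, Q, P, S` the weights `0, 1, 2, 3`,
left multiplication by anything raises the weight, so `V^{n+1}` lies in the span of the basis
vectors of weight `≥ n` and `V^5 = 0`. On the right, the plane spanned by `P` and `S`
reproduces itself: `PR = yS` and `SQ = -P`, so with `y` invertible it lies in every `V^{(n)}`.
-/

open Submodule

section PreLieChains

variable {R V : Type*} [CommRing R] [AddCommGroup V] [Module R V] (mul : V →ₗ[R] V →ₗ[R] V)

theorem preLieL_succ_le_of_mul_mem {F : ℕ → Submodule R V} (hF₀ : F 0 = ⊤)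
    (hF : ∀ m a b, b ∈ F m → mul a b ∈ F (m + 1)) (n : ℕ) :
    preLieL R V mul (n + 1) ≤ F n := by
  induction n with
  | zero => exact hF₀ ▸ le_top
  | succ n ih =>
    refine span_le.mpr ?_
    rintro _ ⟨a, b, hb, rfl⟩
    exact hF n a b (ih hb)

theorem subset_preLieR_of_subset_span_mul {s : Set V}
    (hs : s ⊆ span R {x | ∃ a ∈ s, ∃ b, x = mul a b}) (n : ℕ) :
    s ⊆ preLieR R V mul n := by
  induction n with
  | zero => exact Set.subset_univ s
  | succ n ih =>
    cases n with
    | zero => exact Set.subset_univ s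
    | succ n =>
      refine hs.trans (span_mono ?_)
      rintro _ ⟨a, ha, b, rfl⟩
      exact ⟨a, ih ha, b, rfl⟩

theorem not_exists_preLieR_eq_bot_of_subset_span_mul {s : Set V}
    (hs : s ⊆ span R {x | ∃ a ∈ s, ∃ b, x = mul a b}) {x : V} (hx : x ∈ s) (hx₀ : x ≠ 0) :
    ¬ ∃ n, preLieR R V mul n = ⊥ := fun ⟨n, h⟩ =>
  hx₀ <| (mem_bot R).mp (h ▸ subset_preLieR_of_subset_span_mul mul hs n hx)

end PreLieChains

section WeightSpan

variable {ι R V : Type*} [CommRing R] [AddCommGroup V] [Module R V]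
  (B : Module.Basis ι R V) (w : ι → ℕ)

def weightSpan (m : ℕ) : Submodule R V := span R (B '' {i | m ≤ w i})

theorem weightSpan_zero : weightSpan B w 0 = ⊤ := by
  simp [weightSpan, B.span_eq]

theorem weightSpan_eq_bot {m : ℕ} (hm : ∀ i, w i < m) : weightSpan B w m = ⊥ := by
  simp [weightSpan, fun i => (hm i).not_ge]

theorem weightSpan_antitone : Antitone (weightSpan B w) :=
  fun _ _ h => span_mono (Set.image_mono fun _ hi => h.trans hi)

theorem basis_mem_weightSpan {m : ℕ} {i : ι} (h : m ≤ w i) : B i ∈ weightSpan B w m :=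
  subset_span ⟨i, h, rfl⟩

theorem mul_mem_weightSpan_succ {mul : V →ₗ[R] V →ₗ[R] V}
    (hmul : ∀ i j, mul (B i) (B j) ∈ weightSpan B w (w j + 1))
    {m : ℕ} (a : V) {b : V} (hb : b ∈ weightSpan B w m) :
    mul a b ∈ weightSpan B w (m + 1) := by
  have hmap : map₂ mul (span R (Set.range B)) (weightSpan B w m) ≤ weightSpan B w (m + 1) := by
    rw [weightSpan, map₂_span_span, span_le]
    rintro _ ⟨_, ⟨i, rfl⟩, _, ⟨j, hj, rfl⟩, rfl⟩
    exact weightSpan_antitone B w (Nat.succ_le_succ hj) (hmul i j)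
  exact hmap (apply_mem_map₂ mul (B.span_eq ▸ mem_top) hb)

theorem preLieL_eq_bot_of_mul_mem_weightSpan {mul : V →ₗ[R] V →ₗ[R] V}
    (hmul : ∀ i j, mul (B i) (B j) ∈ weightSpan B w (w j + 1))
    {N : ℕ} (hN : ∀ i, w i < N) : preLieL R V mul (N + 1) = ⊥ :=
  le_bot_iff.mp <| (preLieL_succ_le_of_mul_mem mul (weightSpan_zero B w)
    (fun _ a _ hb => mul_mem_weightSpan_succ B w hmul a hb) N).trans
    (weightSpan_eq_bot B w hN).le

end WeightSpan

theorem statement17_general (p : ℕ) (hp : p.Prime)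
    (j k y : ZMod p) (hy : y ≠ 0)
    (V : Type*) [AddCommGroup V] [Module (ZMod p) V]
    (B : Module.Basis (Fin 4) (ZMod p) V) (P Q R S : V)
    (hB : B 0 = P ∧ B 1 = Q ∧ B 2 = R ∧ B 3 = S)
    (mul : V →ₗ[ZMod p] V →ₗ[ZMod p] V)
    (hPS : mul P S = 0) (hSS : mul S S = 0) (hQS : mul Q S = 0) (hRS : mul R S = 0)
    (hPP : mul P P = 0) (hSP : mul S P = 0) (hQP : mul Q P = 0) (hPQ : mul P Q = 0)
    (hRQ : mul R Q = 0) (hQR : mul Q R = 0)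
    (hRR : mul R R = j • P + k • S) (hQQ : mul Q Q = -(y • S))
    (hRP : mul R P = y • S) (hSQ : mul S Q = -P) (hPR : mul P R = y • S)
    (hSR : mul S R = -Q) :
    (∀ a b c : V, mul (mul a b) c - mul a (mul b c)
        = mul (mul b a) c - mul b (mul a c)) ∧
    (∃ n, preLieL (ZMod p) V mul n = ⊥) ∧
    ¬ (∃ n, preLieR (ZMod p) V mul n = ⊥) := by
  have : Fact p.Prime := ⟨hp⟩
  obtain ⟨rfl, rfl, rfl, rfl⟩ := hB
  refine ⟨fun a b c => ?_, ⟨5, ?_⟩, ?_⟩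
  · rw [← B.sum_repr a, ← B.sum_repr b, ← B.sum_repr c]
    simp only [Fin.sum_univ_four, map_add, map_smul, LinearMap.add_apply, LinearMap.smul_apply,
      hPS, hSS, hQS, hRS, hPP, hSP, hQP, hPQ, hRQ, hQR, hRR, hQQ, hRP, hSQ, hPR, hSR,
      smul_zero, smul_add, smul_neg, smul_smul, add_zero, zero_add, neg_zero, map_neg,
      LinearMap.neg_apply]
    module
  · let w : Fin 4 → ℕ := ![2, 1, 0, 3]
    have hmul : ∀ i j, mul (B i) (B j) ∈ weightSpan B w (w j + 1) := by
      intro i j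
      fin_cases i <;> fin_cases j <;>
        simp only [Fin.zero_eta, Fin.mk_one, Fin.reduceFinMk, hPS, hSS, hQS, hRS, hPP, hSP, hQP,
          hPQ, hRQ, hQR, hRR, hQQ, hRP, hSQ, hPR, hSR] <;>
        apply_rules [zero_mem, add_mem, neg_mem, smul_mem, basis_mem_weightSpan] <;> decide
    exact preLieL_eq_bot_of_mul_mem_weightSpan B w hmul (N := 4) (by decide)
  · let s : Set V := {B 0, B 3}
    have hs : s ⊆ span (ZMod p) {x | ∃ a ∈ s, ∃ b, x = mul a b} := by
      rintro _ (rfl | rfl)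
      · exact neg_mem_iff.mp (subset_span ⟨B 3, by simp [s], B 1, hSQ.symm⟩)
      · rw [← inv_smul_smul₀ hy (B 3), ← hPR]
        exact smul_mem _ _ (subset_span ⟨B 0, by simp [s], B 2, rfl⟩)
    exact not_exists_preLieR_eq_bot_of_subset_span_mul mul hs (by simp [s] : B 3 ∈ s)
      (B.ne_zero 3)

/-- the displayed multiplication table on the `𝔽ₚ`-vector space with
basis `P, Q, R, S` defines a pre-Lie algebra which is left nilpotent but not right
nilpotent. -/
theorem statement17 (p : ℕ) (hp : p.Prime) (hp3 : 3 < p)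
    (j k y : ZMod p) (hy : y ≠ 0)
    (V : Type*) [AddCommGroup V] [Module (ZMod p) V]
    (B : Module.Basis (Fin 4) (ZMod p) V) (P Q R S : V)
    (hB : B 0 = P ∧ B 1 = Q ∧ B 2 = R ∧ B 3 = S)
    (mul : V →ₗ[ZMod p] V →ₗ[ZMod p] V)
    (hPS : mul P S = 0) (hSS : mul S S = 0) (hQS : mul Q S = 0) (hRS : mul R S = 0)
    (hPP : mul P P = 0) (hSP : mul S P = 0) (hQP : mul Q P = 0) (hPQ : mul P Q = 0)
    (hRQ : mul R Q = 0) (hQR : mul Q R = 0)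
    (hRR : mul R R = j • P + k • S) (hQQ : mul Q Q = -(y • S))
    (hRP : mul R P = y • S) (hSQ : mul S Q = -P) (hPR : mul P R = y • S)
    (hSR : mul S R = -Q) :
    (∀ a b c : V, mul (mul a b) c - mul a (mul b c)
        = mul (mul b a) c - mul b (mul a c)) ∧
    (∃ n, preLieL (ZMod p) V mul n = ⊥) ∧
    ¬ (∃ n, preLieR (ZMod p) V mul n = ⊥) :=
  statement17_general p hp j k y hy V B P Q R S hB mul hPS hSS hQS hRS hPP hSP hQP hPQ hRQ hQR hRR
    hQQ hRP hSQ hPR hSR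
end
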